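/- Let Z ~ Bernoulli(1/2), and suppose the conditional laws L(f(X₀)) and L(f(X₁)) of a model's output under Z=0 and Z=1 are mutually absolutely continuous with densities r = dL(f(X₀))/dL(f(X₁)). Then the following are equivalent: (i) for every measurable set D with positive probability, |log( P(Z=0 | Ŷ ∈ D) / P(Z=1 | Ŷ ∈ D) )| ≤ ε, where Ŷ is the output; (ii) e^{−ε} ≤ r ≤ e^{ε} almost surely. -/

import Mathlib

open MeasureTheory ProbabilityTheory
open scoped ENNReal ProbabilityTheory

/-!
Bayes' rule with the uniform prior on `Z` turns the posterior odds given `{Ŷ ∈ D}` into the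
likelihood ratio `P₀ D / P₁ D` of the two output laws. So the log-odds bound is the statement
`e^{-ε} P₁ D ≤ P₀ D ≤ e^{ε} P₁ D` for every event `D`, and comparing the set integrals of the
Radon–Nikodym derivative `dP₀/dP₁` with those of constants turns these set-wise bounds into
pointwise `P₁`-a.e. bounds on the derivative.
-/

noncomputable section

/-- Kullback–Leibler divergence between two measures. -/
def klDiv {α : Type*} [MeasurableSpace α] (P Q : Measure α) : ℝ≥0∞ :=
  open Classical in
  if P ≪ Q ∧ Integrable (fun x => Real.log (P.rnDeriv Q x).toReal) P
  then ENNReal.ofReal (∫ x, Real.log (P.rnDeriv Q x).toReal ∂P) else ⊤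

/-- Mutual information of `X` and `Z`: KL divergence of the joint law with respect to the
product of the marginal laws. -/
def mutualInfo {Ω α β : Type*} [MeasurableSpace Ω] [MeasurableSpace α] [MeasurableSpace β]
    (μ : Measure Ω) (X : Ω → α) (Z : Ω → β) : ℝ≥0∞ :=
  klDiv (μ.map fun ω => (X ω, Z ω)) ((μ.map X).prod (μ.map Z))

/-- Total variation distance between two measures. -/
def tvDist {α : Type*} [MeasurableSpace α] (P Q : Measure α) : ℝ :=
  ⨆ s : Set α, |(P s).toReal - (Q s).toReal|

namespace MeasureTheory.Measure

variable {α : Type*} [MeasurableSpace α] {P Q : Measure α}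

theorem ae_rnDeriv_le_iff [SigmaFinite Q] [P.HaveLebesgueDecomposition Q] (hPQ : P ≪ Q)
    (c : ℝ≥0∞) : (∀ᵐ x ∂Q, P.rnDeriv Q x ≤ c) ↔ ∀ s, MeasurableSet s → P s ≤ c * Q s := by
  refine ⟨fun h s hs => ?_, fun h => ?_⟩
  · rw [← setLIntegral_rnDeriv' hPQ hs, ← setLIntegral_const]
    exact setLIntegral_mono_ae aemeasurable_const (h.mono fun x hx _ => hx)
  · refine ae_le_of_forall_setLIntegral_le_of_sigmaFinite (measurable_rnDeriv P Q)
      fun s hs _ => ?_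
    rw [setLIntegral_rnDeriv' hPQ hs, setLIntegral_const]
    exact h s hs

theorem ae_le_rnDeriv_iff [SigmaFinite Q] [P.HaveLebesgueDecomposition Q] (hPQ : P ≪ Q)
    (c : ℝ≥0∞) : (∀ᵐ x ∂Q, c ≤ P.rnDeriv Q x) ↔ ∀ s, MeasurableSet s → c * Q s ≤ P s := by
  refine ⟨fun h s hs => ?_, fun h => ?_⟩
  · rw [← setLIntegral_rnDeriv' hPQ hs, ← setLIntegral_const]
    exact setLIntegral_mono_ae (measurable_rnDeriv P Q).aemeasurable (h.mono fun x hx _ => hx)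
  · refine ae_le_of_forall_setLIntegral_le_of_sigmaFinite measurable_const fun s hs _ => ?_
    rw [setLIntegral_rnDeriv' hPQ hs, setLIntegral_const]
    exact h s hs

theorem ae_toReal_rnDeriv_mem_Icc_iff [SigmaFinite P] [SigmaFinite Q] (hPQ : P ≪ Q) {a b : ℝ}
    (hb : 0 ≤ b) :
    (∀ᵐ x ∂Q, a ≤ (P.rnDeriv Q x).toReal ∧ (P.rnDeriv Q x).toReal ≤ b) ↔
      ∀ s, MeasurableSet s →
        ENNReal.ofReal a * Q s ≤ P s ∧ P s ≤ ENNReal.ofReal b * Q s := by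
  simp only [imp_and, forall_and, ← ae_le_rnDeriv_iff hPQ, ← ae_rnDeriv_le_iff hPQ,
    ← Filter.eventually_and]
  refine Filter.eventually_congr ((rnDeriv_lt_top P Q).mono fun x hx => ?_)
  rw [ENNReal.ofReal_le_iff_le_toReal hx.ne, ENNReal.le_ofReal_iff_toReal_le hx.ne hb]

end MeasureTheory.Measure

theorem Real.abs_log_div_le_iff {a b ε : ℝ} (ha : 0 < a) (hb : 0 < b) :
    |Real.log (a / b)| ≤ ε ↔ Real.exp (-ε) * b ≤ a ∧ a ≤ Real.exp ε * b := by
  rw [abs_le, Real.le_log_iff_exp_le (div_pos ha hb), Real.log_le_iff_le_exp (div_pos ha hb),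
    le_div_iff₀ hb, div_le_iff₀ hb]

theorem ENNReal.abs_log_toReal_div_le_iff {a b : ℝ≥0∞} (ha₀ : a ≠ 0) (hb₀ : b ≠ 0) (ha : a ≠ ∞)
    (hb : b ≠ ∞) {ε : ℝ} :
    |Real.log (a.toReal / b.toReal)| ≤ ε ↔
      ENNReal.ofReal (Real.exp (-ε)) * b ≤ a ∧ a ≤ ENNReal.ofReal (Real.exp ε) * b := by
  have mul_b : ∀ c : ℝ, 0 ≤ c → ENNReal.ofReal c * b = ENNReal.ofReal (c * b.toReal) :=
    fun c hc => by rw [ENNReal.ofReal_mul hc, ENNReal.ofReal_toReal hb]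
  rw [Real.abs_log_div_le_iff (ENNReal.toReal_pos ha₀ ha) (ENNReal.toReal_pos hb₀ hb),
    mul_b _ (Real.exp_nonneg _), mul_b _ (Real.exp_nonneg _), ENNReal.ofReal_le_iff_le_toReal ha,
    ENNReal.le_ofReal_iff_toReal_le ha (by positivity)]

namespace ProbabilityTheory

variable {Ω : Type*} [MeasurableSpace Ω] {μ : Measure Ω} [IsFiniteMeasure μ] {A B S : Set Ω}

theorem cond_toReal_div_cond_toReal_of_measure_eq (hA : MeasurableSet A) (hB : MeasurableSet B)
    (hS : MeasurableSet S) (hS₀ : μ S ≠ 0) (hAB : μ A = μ B) (hB₀ : μ B ≠ 0) :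
    (μ[A | S]).toReal / (μ[B | S]).toReal = (μ[S | A]).toReal / (μ[S | B]).toReal := by
  have hS' : ((μ S)⁻¹).toReal ≠ 0 :=
    ENNReal.toReal_ne_zero.2 ⟨ENNReal.inv_ne_zero.2 (measure_ne_top μ S), ENNReal.inv_ne_top.2 hS₀⟩
  have hB' : (μ B).toReal ≠ 0 := ENNReal.toReal_ne_zero.2 ⟨hB₀, measure_ne_top μ B⟩
  simp only [cond_eq_inv_mul_cond_mul hS hA, cond_eq_inv_mul_cond_mul hS hB, hAB,
    ENNReal.toReal_mul]
  rw [mul_div_mul_right _ _ hB', mul_div_mul_left _ _ hS']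

theorem measure_eq_zero_iff_cond_eq_zero (hA : MeasurableSet A) (hA₀ : μ A ≠ 0)
    (hAc₀ : μ Aᶜ ≠ 0) : μ S = 0 ↔ μ[S | A] = 0 ∧ μ[S | Aᶜ] = 0 := by
  rw [← cond_add_cond_compl_eq hA μ (t := S)]
  simp [hA₀, hAc₀]

end ProbabilityTheory

/-- With `Z ~ Bernoulli(1/2)` and mutually absolutely continuous conditional
output laws `P₀ = L(Ŷ|Z=0)`, `P₁ = L(Ŷ|Z=1)`, the ε-bounded posterior log-odds condition
(for all events `D` of positive probability) is equivalent to the Radon–Nikodym density ratio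
`r = dP₀/dP₁` lying in `[e^{−ε}, e^{ε}]` almost surely. -/
theorem posterior_odds_iff_density_ratio
    {Ω 𝒴 : Type*} [MeasurableSpace Ω] [MeasurableSpace 𝒴]
    (μ : Measure Ω) [IsProbabilityMeasure μ]
    (Z : Ω → Bool) (Yhat : Ω → 𝒴) (hZ : Measurable Z) (hY : Measurable Yhat)
    (hhalf : μ (Z ⁻¹' {false}) = 1/2) (ε : ℝ)
    (hAC0 : (μ[|Z ⁻¹' {false}]).map Yhat ≪ (μ[|Z ⁻¹' {true}]).map Yhat)
    (hAC1 : (μ[|Z ⁻¹' {true}]).map Yhat ≪ (μ[|Z ⁻¹' {false}]).map Yhat) :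
    (∀ D : Set 𝒴, MeasurableSet D → μ (Yhat ⁻¹' D) ≠ 0 →
        |Real.log ((μ[|Yhat ⁻¹' D] (Z ⁻¹' {false})).toReal /
            (μ[|Yhat ⁻¹' D] (Z ⁻¹' {true})).toReal)| ≤ ε) ↔
      (∀ᵐ y ∂((μ[|Z ⁻¹' {true}]).map Yhat),
        Real.exp (-ε) ≤
            (((μ[|Z ⁻¹' {false}]).map Yhat).rnDeriv ((μ[|Z ⁻¹' {true}]).map Yhat) y).toReal ∧
          (((μ[|Z ⁻¹' {false}]).map Yhat).rnDeriv
              ((μ[|Z ⁻¹' {true}]).map Yhat) y).toReal ≤ Real.exp ε) := by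
  set A₀ := Z ⁻¹' {false}
  set A₁ := Z ⁻¹' {true}
  set P₀ := (μ[|A₀]).map Yhat
  set P₁ := (μ[|A₁]).map Yhat
  have hA₁ : MeasurableSet A₁ := hZ (measurableSet_singleton _)
  have hA₁c : A₁ᶜ = A₀ := by ext ω; simp [A₀, A₁]
  have hμA₁ : μ A₁ = 1 / 2 := by
    rw [← compl_compl A₁, prob_compl_eq_one_sub hA₁.compl, hA₁c, hhalf, one_div,
      ENNReal.one_sub_inv_two]
  have hne_zero : ∀ {A}, μ A = 1 / 2 → μ A ≠ 0 := fun h => by rw [h]; norm_num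
  have hP : ∀ {A D}, MeasurableSet D → (μ[|A]).map Yhat D = μ[Yhat ⁻¹' D | A] :=
    fun hD => Measure.map_apply hY hD
  have hnull : ∀ D, MeasurableSet D → (μ (Yhat ⁻¹' D) = 0 ↔ P₁ D = 0) := fun D hD => by
    rw [measure_eq_zero_iff_cond_eq_zero hA₁ (hne_zero hμA₁) (hA₁c ▸ hne_zero hhalf), hA₁c,
      ← hP hD, ← hP hD, and_iff_left_of_imp (@hAC0 D)]
  have hD : ∀ D, MeasurableSet D →
      ((μ (Yhat ⁻¹' D) ≠ 0 → |Real.log ((μ[A₀ | Yhat ⁻¹' D]).toReal /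
          (μ[A₁ | Yhat ⁻¹' D]).toReal)| ≤ ε) ↔
        ENNReal.ofReal (Real.exp (-ε)) * P₁ D ≤ P₀ D ∧
          P₀ D ≤ ENNReal.ofReal (Real.exp ε) * P₁ D) := by
    intro D hD
    by_cases h₁ : P₁ D = 0
    · simp [hnull D hD, h₁, hAC0 h₁]
    have h₀ : P₀ D ≠ 0 := mt (@hAC1 D) h₁
    rw [← ENNReal.abs_log_toReal_div_le_iff h₀ h₁ (measure_ne_top _ _) (measure_ne_top _ _),
      hP hD, hP hD, ← cond_toReal_div_cond_toReal_of_measure_eq (hA₁c ▸ hA₁.compl) hA₁ (hY hD)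
        ((hnull D hD).not.2 h₁) (hhalf.trans hμA₁.symm) (hne_zero hμA₁)]
    exact ⟨fun h => h ((hnull D hD).not.2 h₁), fun h _ => h⟩
  rw [Measure.ae_toReal_rnDeriv_mem_Icc_iff hAC0 (Real.exp_nonneg ε)]
  exact forall₂_congr hD
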